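/- arXiv:1907.03158 — 2 statements merged into one kernel-verified Lean document; each statement's English description precedes it below -/
import Mathlib

section
/- For every tree T, the γ-graph T(γ) contains no odd cycle; equivalently, T(γ) is bipartite. -/
open SimpleGraph Finset

/-- The closed neighbourhood of a vertex. -/
def closedNbhd {V : Type} (G : SimpleGraph V) (x : V) : Set V :=
  {y | y = x ∨ G.Adj x y}

/-- `D` is a dominating set of `G`. -/
def isDomSet {V : Type} [Fintype V] [DecidableEq V] (G : SimpleGraph V) (D : Finset V) : Prop :=
  ∀ v : V, ∃ d ∈ D, v ∈ closedNbhd G d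

/-- `D` is a minimum dominating set (γ-set) of `G`. -/
def isMinDomSet {V : Type} [Fintype V] [DecidableEq V] (G : SimpleGraph V) (D : Finset V) : Prop :=
  isDomSet G D ∧ ∀ D' : Finset V, isDomSet G D' → D.card ≤ D'.card

/-- The set of `D`-private neighbours of `x`: vertices in `N[x]` not in the closed
neighbourhood of any other vertex of `D`. -/
def privN {V : Type} [Fintype V] [DecidableEq V] (G : SimpleGraph V) (D : Finset V) (x : V) :
    Set V :=
  {y | y ∈ closedNbhd G x ∧ ∀ z ∈ D, z ≠ x → y ∉ closedNbhd G z}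

/-- The γ-graph of `G`: vertices are the γ-sets of `G`, two γ-sets adjacent iff they differ
by a swap of two adjacent vertices. -/
def gammaGraph {V : Type} [Fintype V] [DecidableEq V] (G : SimpleGraph V) :
    SimpleGraph {D : Finset V // isMinDomSet G D} where
  Adj D₁ D₂ := D₁ ≠ D₂ ∧ ∃ u v : V, G.Adj u v ∧
    (D₂.1 = (D₁.1 \ {u}) ∪ {v} ∨ D₁.1 = (D₂.1 \ {u}) ∪ {v})
  symm := by
    refine ⟨?_⟩
    rintro D₁ D₂ ⟨hne, u, v, huv, h | h⟩
    · exact ⟨hne.symm, u, v, huv, Or.inr h⟩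
    · exact ⟨hne.symm, u, v, huv, Or.inl h⟩
  loopless := by refine ⟨?_⟩; rintro D ⟨hne, -⟩; exact hne rfl

/-! A tree is bipartite. All γ-sets have the same size, so an edge `D₁ ~ D₂` of the γ-graph
replaces one vertex `u` of `D₁` by a neighbour `v ∉ D₁`, which has the other colour. Hence the
parity of the number of elements of a γ-set in one colour class alternates along every edge of
the γ-graph, and works as a 2-colouring of it. -/

namespace Finset

variable {α : Type} [DecidableEq α]

lemma mem_and_notMem_of_eq_sdiff_union_singleton {s t : Finset α} {u v : α}
    (hcard : #s = #t) (hne : s ≠ t) (h : t = s \ {u} ∪ {v}) : u ∈ s ∧ v ∉ s := by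
  have hv : v ∉ s := by
    intro hv
    refine hne (eq_of_subset_of_card_le ?_ hcard.le).symm
    rw [h]
    exact union_subset sdiff_subset (singleton_subset_iff.mpr hv)
  refine ⟨by_contra fun hu => ?_, hv⟩
  rw [sdiff_singleton_eq_erase, erase_eq_of_notMem hu] at h
  exact hne (eq_of_subset_of_card_le (h ▸ subset_union_left) hcard.ge)

lemma sum_eq_of_eq_sdiff_union_singleton {M : Type} [AddCommGroup M] (f : α → M)
    {s t : Finset α} {u v : α} (hcard : #s = #t) (hne : s ≠ t) (h : t = s \ {u} ∪ {v}) :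
    ∑ x ∈ t, f x = ∑ x ∈ s, f x - f u + f v := by
  obtain ⟨hu, hv⟩ := mem_and_notMem_of_eq_sdiff_union_singleton hcard hne h
  have ht : t = insert v (s.erase u) := by
    rw [h, sdiff_singleton_eq_erase, union_comm, ← insert_eq]
  rw [ht, sum_insert (fun h => hv (mem_of_mem_erase h)), sum_erase_eq_sub hu, add_comm]

end Finset

variable {V : Type} [Fintype V] [DecidableEq V] {G : SimpleGraph V}

lemma isMinDomSet.card_eq {D₁ D₂ : Finset V} (h₁ : isMinDomSet G D₁) (h₂ : isMinDomSet G D₂) :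
    #D₁ = #D₂ :=
  le_antisymm (h₁.2 _ h₂.1) (h₂.2 _ h₁.1)

lemma sum_coloring_ne_of_gammaGraph_swap {M : Type} [AddCommGroup M] (c : G.Coloring M)
    {D₁ D₂ : {D : Finset V // isMinDomSet G D}} (hne : D₁ ≠ D₂) {u v : V} (huv : G.Adj u v)
    (h : D₂.1 = D₁.1 \ {u} ∪ {v}) : ∑ d ∈ D₁.1, c d ≠ ∑ d ∈ D₂.1, c d := by
  rw [Finset.sum_eq_of_eq_sdiff_union_singleton c (D₁.2.card_eq D₂.2)
    (Subtype.coe_injective.ne hne) h, ne_comm, ne_eq, sub_add_eq_add_sub, sub_eq_iff_eq_add,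
    add_right_inj]
  exact (c.valid huv).symm

def gammaGraph.sumColoring {M : Type} [AddCommGroup M] (c : G.Coloring M) :
    (gammaGraph G).Coloring M :=
  Coloring.mk (fun D => ∑ d ∈ D.1, c d) <| by
    rintro D₁ D₂ ⟨hne, u, v, huv, h | h⟩
    · exact sum_coloring_ne_of_gammaGraph_swap c hne huv h
    · exact (sum_coloring_ne_of_gammaGraph_swap c hne.symm huv h).symm

theorem gammaGraph_colorable_two_of_colorable_two (hG : G.Colorable 2) :
    (gammaGraph G).Colorable 2 := by
  simpa [ZMod.card] using (gammaGraph.sumColoring (M := ZMod 2) hG.some).colorable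

theorem stmt9 {V : Type} [Fintype V] [DecidableEq V] (T : SimpleGraph V) (hT : T.IsTree) :
    (gammaGraph T).Colorable 2 :=
  gammaGraph_colorable_two_of_colorable_two hT.colorable_two
end

section
/- For any tree T, the γ-graph T(γ) contains no subgraph isomorphic to the complete bipartite graph K_{2,3}. -/
open SimpleGraph Finset

/-!
A γ-set `C` adjacent in `T(γ)` to both `A` and `B` yields two edges `e = A ∆ C` and `f = B ∆ C`
of `T` (vertex sets of edges, as `Finset`s) with `e ∆ f = A ∆ B`, and `C = A ∆ e`. In a forest a
nonempty vertex set is the symmetric difference of at most one unordered pair of edges, so `e`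
takes at most two values and `A ≠ B` have at most two common neighbours in `T(γ)`.
-/

open scoped symmDiff

namespace Finset

variable {α : Type*} [DecidableEq α]

theorem card_symmDiff_add_two_mul_card_inter (s t : Finset α) :
    #(s ∆ t) + 2 * #(s ∩ t) = #s + #t := by
  rw [symmDiff_eq_sup_sdiff_inf, sup_eq_union, inf_eq_inter,
    card_sdiff_of_subset inter_subset_union, ← card_union_add_card_inter]
  have := card_le_card (inter_subset_union (s := s) (t := t))
  omega

theorem even_card_symmDiff_iff {s t : Finset α} : Even #(s ∆ t) ↔ (Even #s ↔ Even #t) := by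
  rw [← Nat.even_add, ← card_symmDiff_add_two_mul_card_inter]
  simp [Nat.even_add]

theorem filter_symmDiff (p : α → Prop) [DecidablePred p] (s t : Finset α) :
    (s ∆ t).filter p = s.filter p ∆ t.filter p := by
  ext a
  simp only [mem_filter, mem_symmDiff]
  tauto

theorem even_card_filter_pair {p : α → Prop} [DecidablePred p] {a b : α} (hab : a ≠ b)
    (h : p a ↔ p b) : Even #(({a, b} : Finset α).filter p) := by
  by_cases ha : p a
  · rw [filter_true_of_mem (by simp [ha, ← h]), card_pair hab]
    exact even_two
  · rw [filter_false_of_mem (by simp [ha, ← h]), card_empty]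
    exact Even.zero

theorem symmDiff_sdiff_singleton_union_singleton {S : Finset α} {u v : α}
    (hne : S ≠ S \ {u} ∪ {v}) (hcard : #(S \ {u} ∪ {v}) = #S) :
    S ∆ (S \ {u} ∪ {v}) = {u, v} := by
  have hv : v ∉ S := fun hv => hne (eq_of_subset_of_card_le
    (union_subset sdiff_subset (singleton_subset_iff.2 hv)) hcard.ge).symm
  have hu : u ∈ S := by
    by_contra hu
    rw [sdiff_singleton_eq_erase, erase_eq_of_notMem hu, union_comm, ← insert_eq,
      card_insert_of_notMem hv] at hcard
    omega
  ext w
  simp only [mem_symmDiff, mem_union, mem_sdiff, mem_singleton, mem_insert]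
  by_cases hwu : w = u <;> by_cases hwv : w = v <;> simp_all

end Finset

namespace SimpleGraph

variable {V : Type*} [DecidableEq V] {G : SimpleGraph V}

def IsSlide (G : SimpleGraph V) (S T : Finset V) : Prop :=
  ∃ u v, G.Adj u v ∧ S ∆ T = {u, v}

theorem Adj.deleteEdges_singleton_of_ne {a b u v : V} (hab : G.Adj a b)
    (h : ({a, b} : Finset V) ≠ {u, v}) : (G.deleteEdges {s(u, v)}).Adj a b := by
  refine deleteEdges_adj.2 ⟨hab, ?_⟩
  rintro hs
  rcases Sym2.eq_iff.1 (Set.mem_singleton_iff.1 hs) with ⟨rfl, rfl⟩ | ⟨rfl, rfl⟩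
  · exact h rfl
  · exact h (pair_comm _ _)

/-- Cutting a forest along the edge `uv` separates `u` from `v`; every other edge lies on one side,
so it meets the side of `u` in an even number of endpoints, while `uv` meets it in one. -/
theorem IsAcyclic.eq_or_eq_of_symmDiff_eq (hG : G.IsAcyclic) {u v p q x y r s : V}
    (huv : G.Adj u v) (hpq : G.Adj p q) (hxy : G.Adj x y) (hrs : G.Adj r s)
    (hne : ({u, v} : Finset V) ≠ {p, q})
    (h : ({u, v} : Finset V) ∆ {p, q} = {x, y} ∆ {r, s}) :
    ({x, y} : Finset V) = {u, v} ∨ ({x, y} : Finset V) = {p, q} := by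
  classical
  by_contra! hxy_ne
  have hrs_ne : ({r, s} : Finset V) ≠ {u, v} := by
    rintro hrs_eq
    rw [hrs_eq, symmDiff_comm _ ({u, v} : Finset V), symmDiff_right_inj] at h
    exact hxy_ne.2 h.symm
  set side := (G.deleteEdges {s(u, v)}).Reachable u
  have hside : ∀ {a b : V}, G.Adj a b → ({a, b} : Finset V) ≠ {u, v} →
      Even #(({a, b} : Finset V).filter side) := fun hab hne' =>
    have hab' := hab.deleteEdges_singleton_of_ne hne'
    even_card_filter_pair hab.ne
      ⟨fun h => h.trans hab'.reachable, fun h => h.trans hab'.symm.reachable⟩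
  have huv_side : ({u, v} : Finset V).filter side = {u} := by
    have hbridge : ¬ side v := isBridge_iff.1 (isAcyclic_iff_forall_adj_isBridge.1 hG huv)
    ext w
    simp only [mem_filter, mem_insert, mem_singleton]
    constructor
    · rintro ⟨rfl | rfl, hw⟩
      · rfl
      · exact absurd hw hbridge
    · rintro rfl
      exact ⟨Or.inl rfl, Reachable.refl _⟩
  have hparity := congrArg (fun t => Even #(t.filter side)) h
  simp only [filter_symmDiff, even_card_symmDiff_iff, huv_side, card_singleton] at hparity
  simp [hside hpq hne.symm, hside hxy hxy_ne.1, hside hrs hrs_ne] at hparity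

theorem IsAcyclic.eq_or_symmDiff_eq_of_isSlide (hG : G.IsAcyclic) {A B C C' : Finset V}
    (hAB : A ≠ B) (hA : G.IsSlide A C) (hB : G.IsSlide B C) (hA' : G.IsSlide A C')
    (hB' : G.IsSlide B C') : C' = C ∨ A ∆ C' = B ∆ C := by
  obtain ⟨u, v, huv, hAC⟩ := hA
  obtain ⟨p, q, hpq, hBC⟩ := hB
  obtain ⟨x, y, hxy, hAC'⟩ := hA'
  obtain ⟨r, s, hrs, hBC'⟩ := hB'
  have hne : A ∆ C ≠ B ∆ C := fun h => hAB (symmDiff_left_inj.1 h)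
  have hcancel : ∀ D : Finset V, (A ∆ D) ∆ (B ∆ D) = A ∆ B := fun D => by
    rw [symmDiff_symmDiff_symmDiff_comm, symmDiff_self, symmDiff_bot]
  rw [hAC, hBC] at hne
  rcases hG.eq_or_eq_of_symmDiff_eq huv hpq hxy hrs hne
    (by rw [← hAC, ← hBC, ← hAC', ← hBC', hcancel, hcancel]) with h | h
  · exact Or.inl (symmDiff_right_injective A (hAC'.trans (h.trans hAC.symm)))
  · exact Or.inr (hAC'.trans (h.trans hBC.symm))

theorem IsAcyclic.eq_or_eq_or_eq_of_isSlide (hG : G.IsAcyclic) {A B C₀ C₁ C₂ : Finset V}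
    (hAB : A ≠ B) (hA₀ : G.IsSlide A C₀) (hB₀ : G.IsSlide B C₀) (hA₁ : G.IsSlide A C₁)
    (hB₁ : G.IsSlide B C₁) (hA₂ : G.IsSlide A C₂) (hB₂ : G.IsSlide B C₂) :
    C₁ = C₀ ∨ C₂ = C₀ ∨ C₁ = C₂ := by
  rcases hG.eq_or_symmDiff_eq_of_isSlide hAB hA₀ hB₀ hA₁ hB₁ with h₁ | h₁
  · exact Or.inl h₁
  rcases hG.eq_or_symmDiff_eq_of_isSlide hAB hA₀ hB₀ hA₂ hB₂ with h₂ | h₂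
  · exact Or.inr (Or.inl h₂)
  · exact Or.inr (Or.inr (symmDiff_right_injective A (h₁.trans h₂.symm)))

end SimpleGraph

theorem SimpleGraph.isSlide_of_gammaGraph_adj {V : Type} [Fintype V] [DecidableEq V]
    {G : SimpleGraph V} {D₁ D₂ : {D : Finset V // isMinDomSet G D}}
    (h : (gammaGraph G).Adj D₁ D₂) : G.IsSlide D₁.1 D₂.1 := by
  have hcard : #D₁.1 = #D₂.1 := (D₁.2.2 _ D₂.2.1).antisymm (D₂.2.2 _ D₁.2.1)
  obtain ⟨hne, u, v, huv, h₂ | h₁⟩ := h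
  · refine ⟨u, v, huv, ?_⟩
    rw [h₂] at hcard ⊢
    exact symmDiff_sdiff_singleton_union_singleton (h₂ ▸ Subtype.coe_ne_coe.2 hne) hcard.symm
  · refine ⟨u, v, huv, ?_⟩
    rw [symmDiff_comm, h₁]
    rw [h₁] at hcard
    exact symmDiff_sdiff_singleton_union_singleton (h₁ ▸ Subtype.coe_ne_coe.2 hne.symm) hcard

theorem stmt18 {V : Type} [Fintype V] [DecidableEq V] (T : SimpleGraph V) (hT : T.IsTree) :
    ¬∃ f : completeBipartiteGraph (Fin 2) (Fin 3) →g gammaGraph T,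
      Function.Injective f := by
  rintro ⟨f, hf⟩
  have hval : Function.Injective fun x => (f x).1 := Subtype.val_injective.comp hf
  have hslide : ∀ i j, T.IsSlide (f (.inl i)).1 (f (.inr j)).1 :=
    fun i j => isSlide_of_gammaGraph_adj (f.map_adj (by simp))
  rcases hT.isAcyclic.eq_or_eq_or_eq_of_isSlide (hval.ne (by decide)) (hslide 0 0) (hslide 1 0)
    (hslide 0 1) (hslide 1 1) (hslide 0 2) (hslide 1 2) with h | h | h <;>
  exact absurd (hval h) (by decide)
end
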